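/- Let O = ℂ[x_1,...,x_n], and let y_1,...,y_d ∈ O be algebraically independent polynomials such that at some point the d×n Jacobian matrix [∂y_i/∂x_j] has rank d. Extend to the jet ring O_∞ = ℂ[x_j^{(i)} : i ≥ 0] with derivation D(x_j^{(i)}) = x_j^{(i+1)}, and set y_i^{(k)} = D^k(y_i). Then the family {y_i^{(k)} : 1 ≤ i ≤ d, k ≥ 0} is algebraically independent over ℂ, and distinct monomials in the variables y_i^{(k)} with k ≥ 1 are linearly independent over the rational function field ℂ(x_1,...,x_n). -/

import Mathlib

open MvPolynomial

/-- The derivation `D` of the jet ring `O_∞ = ℂ[x_j^{(i)} : 1 ≤ j ≤ n, i ≥ 0]`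
with `D(x_j^{(i)}) = x_j^{(i+1)}`. -/
noncomputable def jetD (n : ℕ) :
    Derivation ℂ (MvPolynomial (Fin n × ℕ) ℂ) (MvPolynomial (Fin n × ℕ) ℂ) :=
  MvPolynomial.mkDerivation ℂ fun v => X (v.1, v.2 + 1)

/-!
Modulo terms of order `≤ k`, the jet `y_i^{(k+1)}` is `∑_j (∂y_i/∂x_j) x_j^{(k+1)}`. Over
`K = ℂ(x_1, …, x_n)` the Jacobian has a right inverse, because it has full rank at a point, so
the top-order variables `x_j^{(k+1)}` can be solved for recursively in `k`. This gives a left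
inverse of the substitution `Y_{i,k} ↦ y_i^{(k+1)}` over `K`: the jets of positive order are
algebraically independent over `K`, hence over `ℂ[x]`, which is the second claim. The first
follows because the jets of order zero are the `y_i` themselves, which are algebraically
independent over `ℂ` and lie in the coefficient ring `ℂ[x]`.
-/

open Function
open scoped Matrix

theorem Matrix.exists_mul_eq_one_of_rank_eq_card {F m n : Type*} [Field F] [Fintype m]
    [Fintype n] [DecidableEq m] [DecidableEq n] (A : Matrix m n F)
    (h : A.rank = Fintype.card m) : ∃ B : Matrix n m F, A * B = 1 := by
  have hsurj : LinearMap.range A.mulVecLin = ⊤ :=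
    Submodule.eq_top_of_finrank_eq (by rw [← Matrix.rank, h, Module.finrank_fintype_fun_eq_card])
  obtain ⟨g, hg⟩ := A.mulVecLin.exists_rightInverse_of_surjective hsurj
  refine ⟨LinearMap.toMatrix' g, ?_⟩
  rw [← LinearMap.toMatrix'_toLin' A, Matrix.toLin'_apply', ← LinearMap.toMatrix'_comp, hg,
    LinearMap.toMatrix'_id]

theorem MvPolynomial.exists_map_fractionRing_mul_eq_one {σ k m n : Type*} [Field k]
    [Fintype m] [Fintype n] [DecidableEq m] [DecidableEq n]
    (M : Matrix m n (MvPolynomial σ k)) (pt : σ → k)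
    (h : (M.map (eval pt)).rank = Fintype.card m) :
    ∃ b : Matrix n m (FractionRing (MvPolynomial σ k)),
      M.map (algebraMap _ (FractionRing (MvPolynomial σ k))) * b = 1 := by
  obtain ⟨B, hB⟩ := (M.map (eval pt)).exists_mul_eq_one_of_rank_eq_card h
  set K := FractionRing (MvPolynomial σ k)
  -- `N = M B` has value `1` at `pt`, so its determinant is nonzero and `N` is invertible over `K`.
  let N : Matrix m m (MvPolynomial σ k) := .of fun i j => ∑ l, M i l * C (B l j)
  have hN_eval : N.map (eval pt) = 1 := by
    rw [← hB]; ext i j; simp [N, Matrix.mul_apply]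
  have hN_frac : N.map (algebraMap _ K) = M.map (algebraMap _ K) * B.map (algebraMap k K) := by
    ext i j
    simp [N, Matrix.mul_apply, IsScalarTower.algebraMap_apply k (MvPolynomial σ k) K]
  have hdet : IsUnit (N.map (algebraMap _ K)).det := by
    rw [← RingHom.mapMatrix_apply, ← RingHom.map_det, isUnit_iff_ne_zero,
      map_ne_zero_iff _ (IsFractionRing.injective _ _)]
    intro h0
    have := congrArg (eval pt) h0
    rw [RingHom.map_det, RingHom.mapMatrix_apply, hN_eval, Matrix.det_one, map_zero] at this
    exact one_ne_zero this
  refine ⟨B.map (algebraMap k K) * (N.map (algebraMap _ K))⁻¹, ?_⟩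
  rw [← Matrix.mul_assoc, ← hN_frac, Matrix.mul_nonsing_inv _ hdet]

theorem MvPolynomial.aeval_eq_of_mem_supported {R S σ : Type*} [CommSemiring R] [CommSemiring S]
    [Algebra R S] {s : Set σ} {f g : σ → S} (hfg : Set.EqOn f g s) {p : MvPolynomial σ R}
    (hp : p ∈ supported R s) : aeval f p = aeval g p :=
  hom_congr_vars (f₁ := (aeval f).toRingHom) (f₂ := (aeval g).toRingHom) (by ext; simp)
    (fun i hi _ => by simpa using hfg (mem_supported.1 hp hi)) rfl

theorem AlgebraicIndependent.sumElim_of_injective_eval₂Hom {R A ι κ : Type*} [CommRing R]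
    [CommRing A] [Algebra R A] {x : ι → A} {z : κ → A}
    (h : Injective (eval₂Hom (aeval x : MvPolynomial ι R →ₐ[R] A).toRingHom z)) :
    AlgebraicIndependent R (Sum.elim z x) := by
  have hfac : (aeval (Sum.elim z x) : MvPolynomial (κ ⊕ ι) R → A) =
      eval₂Hom (aeval x : MvPolynomial ι R →ₐ[R] A).toRingHom z ∘ sumAlgEquiv R κ ι := by
    funext P
    induction P using MvPolynomial.induction_on with
    | C r => simp
    | add p q hp hq => simp_all
    | mul_X p i hp => cases i <;> simp_all
  rw [algebraicIndependent_iff_injective_aeval, hfac]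
  exact h.comp (sumAlgEquiv R κ ι).injective

section Triangular

variable {K ι κ : Type*} [CommRing K] [Fintype ι] [Fintype κ]
  (a : Matrix ι κ K) (b : Matrix κ ι K) (Z : ι × ℕ → MvPolynomial (κ × ℕ) K)

noncomputable def lowerPart (i : ι) (k : ℕ) : MvPolynomial (κ × ℕ) K :=
  Z (i, k) - ∑ j, C (a i j) * X (j, k + 1)

-- A left inverse of `aeval Z`: `Z (i, k)` is `∑ j, a i j X (j, k + 1)` plus terms of level `≤ k`,
-- which determines `X (j, k + 1)` through the right inverse `b` by recursion on the level.
noncomputable def triangularInv : κ × ℕ → MvPolynomial (ι × ℕ) K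
  | (_, 0) => 0
  | (j, k + 1) => ∑ i, C (b j i) *
      (X (i, k) - aeval (fun v => if v.2 ≤ k then triangularInv v else 0) (lowerPart a Z i k))
termination_by v => v.2

variable {a b Z}

theorem aeval_triangularInv [DecidableEq ι] (hab : a * b = 1)
    (hZ : ∀ i k, lowerPart a Z i k ∈ supported K {v | v.2 ≤ k}) (p : ι × ℕ) :
    aeval (triangularInv a b Z) (Z p) = X p := by
  obtain ⟨i, k⟩ := p
  set lower := fun v : κ × ℕ => if v.2 ≤ k then triangularInv a b Z v else 0
  set T : ι → MvPolynomial (ι × ℕ) K := fun l => X (l, k) - aeval lower (lowerPart a Z l k)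
  have hlow : aeval (triangularInv a b Z) (lowerPart a Z i k) = aeval lower (lowerPart a Z i k) :=
    aeval_eq_of_mem_supported (fun v hv => (if_pos hv).symm) (hZ i k)
  have htop : (fun j => triangularInv a b Z (j, k + 1)) = b.map C *ᵥ T := by
    ext j
    rw [triangularInv.eq_2]
    rfl
  calc aeval (triangularInv a b Z) (Z (i, k))
      = (a.map C *ᵥ fun j => triangularInv a b Z (j, k + 1)) i
          + aeval (triangularInv a b Z) (lowerPart a Z i k) := by
        simp [lowerPart, Matrix.mulVec, dotProduct]
    _ = X (i, k) := by
        rw [htop, Matrix.mulVec_mulVec, ← Matrix.map_mul, hab,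
          Matrix.map_one _ (map_zero _) (map_one _), Matrix.one_mulVec, hlow, sub_add_cancel]

theorem aeval_injective_of_triangular [DecidableEq ι] (hab : a * b = 1)
    (hZ : ∀ i k, lowerPart a Z i k ∈ supported K {v | v.2 ≤ k}) :
    Injective (aeval (R := K) Z) := by
  refine LeftInverse.injective (g := aeval (triangularInv a b Z)) fun P => ?_
  rw [← AlgHom.comp_apply, comp_aeval, funext (aeval_triangularInv hab hZ), aeval_X_left_apply]

end Triangular

section Jets

variable {n : ℕ}

noncomputable def jets {d : ℕ} (y : Fin d → MvPolynomial (Fin n) ℂ) (p : Fin d × ℕ) :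
    MvPolynomial (Fin n × ℕ) ℂ :=
  (jetD n)^[p.2] (rename (·, 0) (y p.1))

noncomputable def positiveJetsEval {d : ℕ} (y : Fin d → MvPolynomial (Fin n) ℂ) :
    MvPolynomial (Fin d × ℕ) (MvPolynomial (Fin n) ℂ) →+* MvPolynomial (Fin n × ℕ) ℂ :=
  eval₂Hom (rename (·, 0)).toRingHom fun p => jets y (p.1, p.2 + 1)

@[simp] theorem jetD_X (v : Fin n × ℕ) : jetD n (X v) = X (v.1, v.2 + 1) :=
  mkDerivation_X _ _ _

theorem jetD_rename (f : MvPolynomial (Fin n) ℂ) :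
    jetD n (rename (·, 0) f) = ∑ j, rename (·, 0) (pderiv j f) * X (j, 1) := by
  induction f using MvPolynomial.induction_on with
  | C a => simp [derivation_C]
  | add p q hp hq => simp [hp, hq, add_mul, Finset.sum_add_distrib]
  | mul_X p j hp =>
    simp [hp, Derivation.leibniz, pderiv_X, Pi.single_apply, apply_ite, add_mul, ite_mul,
      Finset.sum_add_distrib, Finset.mul_sum, mul_assoc]

theorem jetD_mem_supported {k : ℕ} {p : MvPolynomial (Fin n × ℕ) ℂ}
    (hp : p ∈ supported ℂ {v | v.2 ≤ k}) : jetD n p ∈ supported ℂ {v | v.2 ≤ k + 1} := by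
  induction hp using Algebra.adjoin_induction with
  | mem q hq =>
    obtain ⟨v, hv, rfl⟩ := hq
    exact jetD_X v ▸ X_mem_supported.2 (Nat.succ_le_succ hv)
  | algebraMap r => simp
  | add p q _ _ hp hq => simpa using add_mem hp hq
  | mul p q hp' hq' hp hq =>
    rw [Derivation.leibniz]
    have hle := supported_mono (R := ℂ)
      (show {v : Fin n × ℕ | v.2 ≤ k} ⊆ {v | v.2 ≤ k + 1} from fun _ => Nat.le_succ_of_le)
    exact add_mem (mul_mem (hle hp') hq) (mul_mem (hle hq') hp)

theorem rename_mem_supported_le (f : MvPolynomial (Fin n) ℂ) (k : ℕ) :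
    rename (·, 0) f ∈ supported ℂ {v : Fin n × ℕ | v.2 ≤ k} :=
  mem_supported.2 fun v hv => by
    obtain ⟨j, -, rfl⟩ := mem_vars_rename _ _ hv
    exact Nat.zero_le k

theorem iterate_jetD_rename_sub_mem_supported (f : MvPolynomial (Fin n) ℂ) (k : ℕ) :
    (jetD n)^[k + 1] (rename (·, 0) f) - ∑ j, rename (·, 0) (pderiv j f) * X (j, k + 1)
      ∈ supported ℂ {v | v.2 ≤ k} := by
  induction k with
  | zero => simp [jetD_rename]
  | succ k ih =>
    have hstep : (jetD n)^[k + 1 + 1] (rename (·, 0) f)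
          - ∑ j, rename (·, 0) (pderiv j f) * X (j, k + 1 + 1)
        = jetD n ((jetD n)^[k + 1] (rename (·, 0) f)
            - ∑ j, rename (·, 0) (pderiv j f) * X (j, k + 1))
          + ∑ j, X (j, k + 1) * jetD n (rename (·, 0) (pderiv j f)) := by
      simp only [iterate_succ_apply' _ (k + 1), map_sub, map_sum, Derivation.leibniz, smul_eq_mul,
        jetD_X, Finset.sum_add_distrib]
      ring
    rw [hstep]
    refine add_mem (jetD_mem_supported ih) (sum_mem fun j _ => mul_mem ?_ ?_)
    · exact X_mem_supported.2 (le_refl (k + 1))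
    · refine supported_mono ?_ (jetD_mem_supported (rename_mem_supported_le _ 0))
      exact fun v (hv : v.2 ≤ 0 + 1) => show v.2 ≤ k + 1 by omega

end Jets

section Specialization

variable (n : ℕ)

noncomputable def levelZeroToCoeff : MvPolynomial (Fin n × ℕ) ℂ →ₐ[ℂ]
    MvPolynomial (Fin n × ℕ) (FractionRing (MvPolynomial (Fin n) ℂ)) :=
  aeval fun v => if v.2 = 0 then C (algebraMap (MvPolynomial (Fin n) ℂ) _ (X v.1)) else X v

variable {n}

theorem levelZeroToCoeff_rename (f : MvPolynomial (Fin n) ℂ) :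
    levelZeroToCoeff n (rename (·, 0) f) = C (algebraMap _ _ f) := by
  induction f using MvPolynomial.induction_on with
  | C a =>
    simp [levelZeroToCoeff, IsScalarTower.algebraMap_apply ℂ (MvPolynomial (Fin n) ℂ)
      (FractionRing (MvPolynomial (Fin n) ℂ))]
  | add p q hp hq => simp [hp, hq]
  | mul_X p j hp => rw [map_mul, rename_X, map_mul, hp]; simp [levelZeroToCoeff]

@[simp] theorem levelZeroToCoeff_X_succ (j : Fin n) (k : ℕ) :
    levelZeroToCoeff n (X (j, k + 1)) = X (j, k + 1) := by
  simp [levelZeroToCoeff]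

theorem levelZeroToCoeff_mem_supported {s : Set (Fin n × ℕ)} {p : MvPolynomial (Fin n × ℕ) ℂ}
    (hp : p ∈ supported ℂ s) :
    levelZeroToCoeff n p ∈ supported (FractionRing (MvPolynomial (Fin n) ℂ)) s := by
  refine (Algebra.adjoin_le (S := ((supported _ s).restrictScalars ℂ).comap
    (levelZeroToCoeff n)) ?_) hp
  rintro _ ⟨v, hv, rfl⟩
  by_cases h0 : v.2 = 0
  · simpa [levelZeroToCoeff, h0] using
      Subalgebra.algebraMap_mem (supported _ s) (algebraMap _ _ (X v.1))
  · simp [levelZeroToCoeff, h0, X_mem_supported.2 hv]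

end Specialization

theorem injective_positiveJetsEval {n d : ℕ} (y : Fin d → MvPolynomial (Fin n) ℂ)
    (hjac : ∃ pt : Fin n → ℂ,
      (Matrix.of fun i j => eval pt (pderiv j (y i))).rank = d) :
    Injective (positiveJetsEval y) := by
  obtain ⟨pt, hpt⟩ := hjac
  set M : Matrix (Fin d) (Fin n) (MvPolynomial (Fin n) ℂ) := .of fun i j => pderiv j (y i)
  obtain ⟨b, hab⟩ := exists_map_fractionRing_mul_eq_one M pt (by rw [Fintype.card_fin]; exact hpt)
  set ι := algebraMap (MvPolynomial (Fin n) ℂ) (FractionRing (MvPolynomial (Fin n) ℂ))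
  set Z : Fin d × ℕ → MvPolynomial (Fin n × ℕ) (FractionRing (MvPolynomial (Fin n) ℂ)) :=
    fun p => levelZeroToCoeff n (jets y (p.1, p.2 + 1))
  have hZ : ∀ i k, lowerPart (M.map ι) Z i k ∈ supported _ {v | v.2 ≤ k} := fun i k => by
    convert levelZeroToCoeff_mem_supported (iterate_jetD_rename_sub_mem_supported (y i) k)
    simp [lowerPart, Z, M, ι, jets, levelZeroToCoeff_rename]
  have hcomm : ∀ P, levelZeroToCoeff n (positiveJetsEval y P) = aeval Z (map ι P) := by
    intro P
    induction P using MvPolynomial.induction_on with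
    | C a => simp [ι, positiveJetsEval, levelZeroToCoeff_rename]
    | add p q hp hq => simp_all
    | mul_X p j hp => simp_all [Z, positiveJetsEval, jets]
  refine Injective.of_comp (f := levelZeroToCoeff n) fun P Q h => ?_
  refine map_injective ι (IsFractionRing.injective _ _) (aeval_injective_of_triangular hab hZ ?_)
  rwa [comp_apply, comp_apply, hcomm, hcomm] at h

theorem algebraicIndependent_jets {n d : ℕ} {y : Fin d → MvPolynomial (Fin n) ℂ}
    (halg : AlgebraicIndependent ℂ y)
    (hinj : Injective (positiveJetsEval y)) :
    AlgebraicIndependent ℂ (jets y) := by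
  let e : Fin d × ℕ ⊕ Fin d ≃ Fin d × ℕ :=
    { toFun := Sum.elim (fun p => (p.1, p.2 + 1)) (·, 0)
      invFun := fun p => if p.2 = 0 then .inr p.1 else .inl (p.1, p.2 - 1)
      left_inv := by rintro (_ | _) <;> simp
      right_inv := fun ⟨i, k⟩ => by cases k <;> simp }
  refine (algebraicIndependent_equiv' e
    (g := Sum.elim (fun p : Fin d × ℕ => jets y (p.1, p.2 + 1))
      fun i => rename (·, 0) (y i))
    (by ext (_ | _) <;> rfl)).1 (.sumElim_of_injective_eval₂Hom ?_)
  have hfac : (eval₂Hom (aeval fun i => rename (·, 0) (y i) :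
        MvPolynomial (Fin d) ℂ →ₐ[ℂ] MvPolynomial (Fin n × ℕ) ℂ).toRingHom
      fun p : Fin d × ℕ => jets y (p.1, p.2 + 1) : _ → _) =
      positiveJetsEval y ∘ map (aeval y).toRingHom := by
    funext P
    rw [comp_apply, coe_eval₂Hom, positiveJetsEval, coe_eval₂Hom, eval₂_map, ← comp_aeval]
    rfl
  rw [hfac]
  exact hinj.comp (map_injective _ halg)

theorem eq_zero_of_eval₂_jets_eq_zero {n d : ℕ} {y : Fin d → MvPolynomial (Fin n) ℂ}
    (hinj : Injective (positiveJetsEval y))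
    {c : MvPolynomial (Fin d × ℕ) (MvPolynomial (Fin n) ℂ)} (hc : ∀ p ∈ c.vars, 1 ≤ p.2)
    (h : eval₂ (rename (·, 0) : MvPolynomial (Fin n) ℂ →ₐ[ℂ] _).toRingHom (jets y) c = 0) :
    c = 0 := by
  obtain ⟨Q, rfl⟩ := exists_rename_eq_of_vars_subset_range c (fun p : Fin d × ℕ => (p.1, p.2 + 1))
    (fun p q h => by simpa [Prod.ext_iff] using h)
    (fun p hp => ⟨(p.1, p.2 - 1), by have := hc p hp; ext <;> simp; omega⟩)
  rw [eval₂_rename] at h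
  rw [hinj (h.trans (map_zero _).symm), map_zero]

/-- If `y_1,…,y_d ∈ ℂ[x_1,…,x_n]` are algebraically independent and their Jacobian
matrix has rank `d` at some point, then the jets `y_i^{(k)} = D^k(y_i)`,
`1 ≤ i ≤ d`, `k ≥ 0`, are algebraically independent over `ℂ`, and distinct
monomials in the `y_i^{(k)}` with `k ≥ 1` are linearly independent over
`ℂ(x_1,…,x_n)` (equivalently, over `ℂ[x_1,…,x_n]`). -/
theorem stmt_13 (n d : ℕ) (y : Fin d → MvPolynomial (Fin n) ℂ)
    (halg : AlgebraicIndependent ℂ y)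
    (hjac : ∃ pt : Fin n → ℂ,
      (Matrix.of fun (i : Fin d) (j : Fin n) =>
        MvPolynomial.eval pt (MvPolynomial.pderiv j (y i))).rank = d) :
    AlgebraicIndependent ℂ (fun p : Fin d × ℕ =>
      (⇑(jetD n))^[p.2] (rename (fun j => (j, 0)) (y p.1))) ∧
    ∀ c : ((Fin d × ℕ) →₀ ℕ) →₀ MvPolynomial (Fin n) ℂ,
      (∀ e ∈ c.support, ∀ p ∈ e.support, 1 ≤ p.2) →
      (c.sum fun e a => rename (fun j => (j, 0)) a *
        e.prod fun p k =>
          ((⇑(jetD n))^[p.2] (rename (fun j => (j, 0)) (y p.1))) ^ k) = 0 →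
      c = 0 := by
  have hinj := injective_positiveJetsEval y hjac
  -- The sum in the second claim is, by definition, `eval₂` at the jets of `ofCoeff c`.
  refine ⟨algebraicIndependent_jets halg hinj, fun c hc hrel => AddMonoidAlgebra.ofCoeff_eq_zero.1
    (eq_zero_of_eval₂_jets_eq_zero hinj (fun p hp => ?_) hrel)⟩
  obtain ⟨e, he, hpe⟩ := (mem_vars_iff_mem_support p).1 hp
  exact hc e he p hpe
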